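/- arXiv:1704.08717 — 2 statements merged into one kernel-verified Lean document; each statement's English description precedes it below -/
import Mathlib

section
/- If ∇ is a metric connection on Y with connection symbols Γ and λ is a k-form on Y with ∇λ = 0, then the Nijenhuis–Lie derivative of λ along any M ∈ Λ^p(Y,TY) is L_M(λ) = [d, i_M](λ) = i_{d_θ M}(λ), where d_θ is the exterior covariant derivative on TY with connection one-form θ_a{}^b = Γ_{ac}{}^b dx^c. -/
open scoped BigOperators

namespace G2S

abbrev Idx : Type := Fin 7

/-- Components of a `k`-form on `Y` (values of the totally antisymmetric
coefficient array at each point of `Y`). -/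
abbrev Form (Y : Type) (k : ℕ) : Type := (Fin k → Idx) → Y → ℝ

noncomputable section

def sgn {n : ℕ} (σ : Equiv.Perm (Fin n)) : ℝ := ((Equiv.Perm.sign σ : ℤ) : ℝ)

/-- The components are totally antisymmetric. -/
def IsAlt {Y : Type} {k : ℕ} (α : Form Y k) : Prop :=
  ∀ (σ : Equiv.Perm (Fin k)) (v : Fin k → Idx), α (v ∘ σ) = sgn σ • α v

/-- Wedge product, in components. -/
def wedge {Y : Type} {k l : ℕ} (α : Form Y k) (β : Form Y l) : Form Y (k + l) :=
  fun v y => (1 / ((k.factorial : ℝ) * (l.factorial : ℝ))) *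
    ∑ σ : Equiv.Perm (Fin (k + l)), sgn σ *
      (α (fun i => v (σ (Fin.castAdd l i))) y * β (fun j => v (σ (Fin.natAdd k j))) y)

/-- `contr α a = α_a`, the `(k-1)`-form obtained by contracting the first index. -/
def contr {Y : Type} {k : ℕ} (α : Form Y (k + 1)) (a : Idx) : Form Y k :=
  fun v => α (Fin.cons a v)

/-- Metric contraction `α ⌟ β` (with the flat metric of an orthonormal frame). -/
def hook {Y : Type} {k m : ℕ} (α : Form Y k) (β : Form Y (k + m)) : Form Y m :=
  fun v y => (1 / (k.factorial : ℝ)) * ∑ w : Fin k → Idx, α w y * β (Fin.append w v) y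

/-- Reindex a form along an equality of degrees. -/
def castF {Y : Type} {k l : ℕ} (h : k = l) (α : Form Y k) : Form Y l :=
  fun v => α (fun i => v (Fin.cast h i))

/-- Insertion operator `i_M(α) = M^a ∧ α_a` of a `TY`-valued `p`-form `M`. -/
def insertF {Y : Type} {p k : ℕ} (M : Idx → Form Y p) (α : Form Y (k + 1)) :
    Form Y (p + k) :=
  fun v y => ∑ a : Idx, wedge (M a) (contr α a) v y

/-- Exterior derivative of a (scalar-valued) form, in components, where
`D f a` denotes the derivative of the function `f` along the `a`-th frame
vector field. -/
def dS {Y : Type} (D : (Y → ℝ) → Idx → Y → ℝ) {k : ℕ} (α : Form Y k) :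
    Form Y (k + 1) :=
  fun v y => ∑ i : Fin (k + 1), ((-1 : ℝ) ^ (i : ℕ)) *
    D (α (fun j => v (i.succAbove j))) (v i) y

/-- The connection one-form `θ_a{}^b = Γ_{ac}{}^b dx^c` associated to the
connection symbols `Γ` (with `Γ a c b = Γ_{ac}{}^b`). -/
def thetaOne {Y : Type} (Γ : Idx → Idx → Idx → Y → ℝ) (a b : Idx) : Form Y 1 :=
  fun v y => Γ a (v 0) b y

/-- Exterior covariant derivative `d_θ` on `TY`-valued forms:
`(d_θ M)^b = d(M^b) + θ_a{}^b ∧ M^a`. -/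
def dTheta {Y : Type} (D : (Y → ℝ) → Idx → Y → ℝ) (Γ : Idx → Idx → Idx → Y → ℝ)
    {p : ℕ} (M : Idx → Form Y p) : Idx → Form Y (p + 1) :=
  fun b => dS D (M b) + castF (show 1 + p = p + 1 by omega)
    ((fun v y => ∑ a : Idx, wedge (thetaOne Γ a b) (M a) v y) : Form Y (1 + p))

/-- Covariant derivative `∇_a` on the components of a `k`-form, determined by
the frame derivations `D` and connection symbols `Γ`. -/
def covD {Y : Type} (D : (Y → ℝ) → Idx → Y → ℝ) (Γ : Idx → Idx → Idx → Y → ℝ)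
    {k : ℕ} (a : Idx) (α : Form Y k) : Form Y k :=
  fun v y => D (α v) a y
    - ∑ j : Fin k, ∑ b : Idx, Γ a (v j) b y * α (Function.update v j b) y

/-!
Each term of the identity is a sum over `a` of wedge products with one factor of the form
`e^x ∧ Φ_x` (`frameWedge`), `e` being the coframe: `dγ = e^x ∧ D_x γ` for alternating `γ`;
`(dλ)_a = D_a λ - d(λ_a)`, where `∇λ = 0` gives `D_a λ = θ_a^b ∧ λ_b`; and
`(d_θ M)^b = e^x ∧ (D_x M^b + Γ_{ax}^b M^a)`. Written as alternation sums over `p + k + 1` slots,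
with the first slot carrying the derivative or the connection symbol, the next `p` slots `M` and
the last `k` slots `λ` (`blockApply`), all three sides take the same normal form. There the
Leibniz terms `M^a ∧ dλ_a` of `d(i_M λ)` cancel against those of `(-1)^p i_M(dλ)`, and what is
left is `(dM^b + θ_a^b ∧ M^a) ∧ λ_b = i_{d_θ M} λ`.
-/

open Equiv Equiv.Perm

lemma sgn_mul {n : ℕ} (σ τ : Perm (Fin n)) : sgn (σ * τ) = sgn σ * sgn τ := by
  simp [sgn]

lemma sgn_mul_self {n : ℕ} (σ : Perm (Fin n)) : sgn σ * sgn σ = 1 := by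
  rw [← sgn_mul]; simp [sgn]

lemma sgn_inv {n : ℕ} (σ : Perm (Fin n)) : sgn σ⁻¹ = sgn σ := by
  simp [sgn]

lemma sgn_cycleRange {n : ℕ} (i : Fin (n + 1)) : sgn i.cycleRange = (-1) ^ (i : ℕ) := by
  simp [sgn, Fin.sign_cycleRange]

section Alternation

variable {α : Type*}

def altSum {m : ℕ} (F : (Fin m → α) → ℝ) (v : Fin m → α) : ℝ :=
  ∑ σ : Perm (Fin m), sgn σ * F (v ∘ σ)

variable {m : ℕ}

lemma altSum_congr {F G : (Fin m → α) → ℝ} (h : ∀ w, F w = G w) (v : Fin m → α) :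
    altSum F v = altSum G v := by
  simp only [altSum, h]

lemma altSum_add (F G : (Fin m → α) → ℝ) (v : Fin m → α) :
    altSum (fun w => F w + G w) v = altSum F v + altSum G v := by
  simp only [altSum, mul_add, Finset.sum_add_distrib]

lemma altSum_const_mul (c : ℝ) (F : (Fin m → α) → ℝ) (v : Fin m → α) :
    altSum (fun w => c * F w) v = c * altSum F v := by
  simp only [altSum, Finset.mul_sum, mul_left_comm]

lemma altSum_sum {ι : Type*} (s : Finset ι) (F : ι → (Fin m → α) → ℝ) (v : Fin m → α) :
    altSum (fun w => ∑ i ∈ s, F i w) v = ∑ i ∈ s, altSum (F i) v := by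
  simp only [altSum, Finset.mul_sum]
  exact Finset.sum_comm

lemma altSum_comp_perm (F : (Fin m → α) → ℝ) (τ : Perm (Fin m)) (v : Fin m → α) :
    altSum (fun w => F (w ∘ τ)) v = sgn τ * altSum F v := by
  rw [altSum, altSum, Finset.mul_sum]
  refine Fintype.sum_equiv (Equiv.mulRight τ) _ _ fun σ => ?_
  simp only [Equiv.coe_mulRight, Perm.coe_mul, Function.comp_assoc, sgn_mul]
  linear_combination (-(sgn σ * F (v ∘ σ ∘ τ))) * sgn_mul_self τ

lemma altSum_apply_comp_perm (F : (Fin m → α) → ℝ) (τ : Perm (Fin m)) (v : Fin m → α) :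
    altSum F (v ∘ τ) = sgn τ * altSum F v := by
  rw [altSum, altSum, Finset.mul_sum]
  refine Fintype.sum_equiv (Equiv.mulLeft τ) _ _ fun σ => ?_
  simp only [Equiv.coe_mulLeft, Perm.coe_mul, Function.comp_assoc, sgn_mul]
  linear_combination (-(sgn σ * F (v ∘ τ ∘ σ))) * sgn_mul_self τ

lemma altSum_comp_cast {n : ℕ} (h : m = n) (F : (Fin m → α) → ℝ) (v : Fin n → α) :
    altSum F (v ∘ Fin.cast h) = altSum (fun w => F (w ∘ Fin.cast h)) v := by
  subst h
  rfl

lemma altSum_absorb {n : ℕ} (e : Perm (Fin m) → Perm (Fin n)) (he : ∀ ρ, sgn (e ρ) = sgn ρ)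
    (F : (Fin n → α) → ℝ) (v : Fin n → α) :
    altSum (fun w => ∑ ρ : Perm (Fin m), sgn ρ * F (w ∘ e ρ)) v = m.factorial * altSum F v := by
  rw [altSum_sum]
  have hρ : ∀ ρ, altSum (fun w => sgn ρ * F (w ∘ e ρ)) v = altSum F v := fun ρ => by
    rw [altSum_const_mul, altSum_comp_perm, he, ← mul_assoc, sgn_mul_self, one_mul]
  simp [hρ, Finset.card_univ, Fintype.card_perm]

end Alternation

section PermExtensions

def extendTail {m : ℕ} (ρ : Perm (Fin m)) : Perm (Fin (m + 1)) :=
  Perm.decomposeFin.symm (0, ρ)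

@[simp] lemma extendTail_zero {m : ℕ} (ρ : Perm (Fin m)) : extendTail ρ 0 = 0 :=
  Perm.decomposeFin_symm_apply_zero 0 ρ

@[simp] lemma extendTail_succ {m : ℕ} (ρ : Perm (Fin m)) (i : Fin m) :
    extendTail ρ i.succ = (ρ i).succ := by
  simp [extendTail, Perm.decomposeFin_symm_apply_succ]

lemma sgn_extendTail {m : ℕ} (ρ : Perm (Fin m)) : sgn (extendTail ρ) = sgn ρ := by
  simp [extendTail, sgn, Perm.decomposeFin.symm_sign]

lemma extendTail_injective {m : ℕ} : Function.Injective (extendTail (m := m)) := fun ρ ρ' h => by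
  simpa using Perm.decomposeFin.symm.injective h

def extendLeft {m l : ℕ} (ρ : Perm (Fin m)) : Perm (Fin (m + l)) :=
  finSumFinEquiv.permCongr (ρ.sumCongr (Equiv.refl (Fin l)))

@[simp] lemma extendLeft_castAdd {m l : ℕ} (ρ : Perm (Fin m)) (i : Fin m) :
    extendLeft (l := l) ρ (Fin.castAdd l i) = Fin.castAdd l (ρ i) := by
  simp [extendLeft, Equiv.permCongr_apply]

@[simp] lemma extendLeft_natAdd {m l : ℕ} (ρ : Perm (Fin m)) (j : Fin l) :
    extendLeft (l := l) ρ (Fin.natAdd m j) = Fin.natAdd m j := by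
  simp [extendLeft, Equiv.permCongr_apply]

lemma sgn_extendLeft {m l : ℕ} (ρ : Perm (Fin m)) : sgn (extendLeft (l := l) ρ) = sgn ρ := by
  simp [extendLeft, sgn, Perm.sign_permCongr]

def extendRight {m l : ℕ} (ρ : Perm (Fin l)) : Perm (Fin (m + l)) :=
  finSumFinEquiv.permCongr ((Equiv.refl (Fin m)).sumCongr ρ)

@[simp] lemma extendRight_castAdd {m l : ℕ} (ρ : Perm (Fin l)) (i : Fin m) :
    extendRight (m := m) ρ (Fin.castAdd l i) = Fin.castAdd l i := by
  simp [extendRight, Equiv.permCongr_apply]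

@[simp] lemma extendRight_natAdd {m l : ℕ} (ρ : Perm (Fin l)) (j : Fin l) :
    extendRight (m := m) ρ (Fin.natAdd m j) = Fin.natAdd m (ρ j) := by
  simp [extendRight, Equiv.permCongr_apply]

lemma sgn_extendRight {m l : ℕ} (ρ : Perm (Fin l)) : sgn (extendRight (m := m) ρ) = sgn ρ := by
  simp [extendRight, sgn, Perm.sign_permCongr]

end PermExtensions

section Absorption

variable {α : Type*} {m : ℕ}

lemma altSum_altSum_tail (G : α → (Fin m → α) → ℝ) (v : Fin (m + 1) → α) :
    altSum (fun z => altSum (G (z 0)) (Fin.tail z)) v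
      = m.factorial * altSum (fun z => G (z 0) (Fin.tail z)) v := by
  rw [← altSum_absorb extendTail sgn_extendTail]
  refine altSum_congr (fun z => Finset.sum_congr rfl fun ρ _ => ?_) v
  have htail : Fin.tail (z ∘ extendTail ρ) = Fin.tail z ∘ ρ := by
    funext i; simp [Fin.tail]
  simp [htail]

lemma altSum_altSum_mul_left {l : ℕ} (G : (Fin m → α) → ℝ) (H : (Fin l → α) → ℝ)
    (v : Fin (m + l) → α) :
    altSum (fun w => altSum G (w ∘ Fin.castAdd l) * H (w ∘ Fin.natAdd m)) v
      = m.factorial * altSum (fun w => G (w ∘ Fin.castAdd l) * H (w ∘ Fin.natAdd m)) v := by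
  rw [← altSum_absorb extendLeft sgn_extendLeft]
  refine altSum_congr (fun w => ?_) v
  rw [altSum, Finset.sum_mul]
  refine Finset.sum_congr rfl fun ρ _ => ?_
  have hL : (w ∘ extendLeft ρ) ∘ Fin.castAdd l = w ∘ Fin.castAdd l ∘ ρ := by
    funext i; simp
  have hR : (w ∘ extendLeft ρ) ∘ Fin.natAdd m = w ∘ Fin.natAdd m := by
    funext j; simp
  rw [hL, hR, mul_assoc]
  rfl

lemma altSum_mul_altSum_right {l : ℕ} (G : (Fin m → α) → ℝ) (H : (Fin l → α) → ℝ)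
    (v : Fin (m + l) → α) :
    altSum (fun w => G (w ∘ Fin.castAdd l) * altSum H (w ∘ Fin.natAdd m)) v
      = l.factorial * altSum (fun w => G (w ∘ Fin.castAdd l) * H (w ∘ Fin.natAdd m)) v := by
  rw [← altSum_absorb extendRight sgn_extendRight]
  refine altSum_congr (fun w => ?_) v
  rw [altSum, Finset.mul_sum]
  refine Finset.sum_congr rfl fun ρ _ => ?_
  have hL : (w ∘ extendRight ρ) ∘ Fin.castAdd l = w ∘ Fin.castAdd l := by
    funext i; simp
  have hR : (w ∘ extendRight ρ) ∘ Fin.natAdd m = w ∘ Fin.natAdd m ∘ ρ := by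
    funext j; simp
  rw [hL, hR, mul_left_comm]
  rfl

lemma bijective_cycleRange_inv_mul_extendTail :
    Function.Bijective fun x : Fin (m + 1) × Perm (Fin m) => x.1.cycleRange⁻¹ * extendTail x.2 := by
  rw [Fintype.bijective_iff_injective_and_card]
  refine ⟨fun ⟨i, ρ⟩ ⟨i', ρ'⟩ h => ?_, by simp [Fintype.card_perm, Nat.factorial_succ]⟩
  have hi : i = i' := by
    simpa [Perm.mul_apply, Perm.inv_def] using congrArg (· 0) h
  subst hi
  exact Prod.ext rfl (extendTail_injective (mul_left_cancel h))

lemma altSum_cons_tail {Φ : α → (Fin m → α) → ℝ}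
    (hΦ : ∀ x (σ : Perm (Fin m)) t, Φ x (t ∘ σ) = sgn σ * Φ x t) (v : Fin (m + 1) → α) :
    altSum (fun z => Φ (z 0) (Fin.tail z)) v
      = m.factorial * ∑ i : Fin (m + 1), (-1) ^ (i : ℕ) * Φ (v i) (i.removeNth v) := by
  rw [altSum, ← Fintype.sum_bijective _ bijective_cycleRange_inv_mul_extendTail _ _ fun _ => rfl,
    Fintype.sum_prod_type, Finset.mul_sum]
  refine Finset.sum_congr rfl fun i _ => ?_
  have hv : v ∘ ⇑i.cycleRange⁻¹ = Fin.cons (v i) (i.removeNth v) :=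
    (Fin.cons_removeNth_eq_comp_cycleRange_symm v i).symm
  have hterm : ∀ ρ : Perm (Fin m),
      sgn (i.cycleRange⁻¹ * extendTail ρ) * Φ ((v ∘ ⇑(i.cycleRange⁻¹ * extendTail ρ)) 0)
          (Fin.tail (v ∘ ⇑(i.cycleRange⁻¹ * extendTail ρ)))
        = (-1) ^ (i : ℕ) * Φ (v i) (i.removeNth v) := fun ρ => by
    have hcomp : v ∘ ⇑(i.cycleRange⁻¹ * extendTail ρ)
        = Fin.cons (v i) (i.removeNth v) ∘ extendTail ρ := by
      rw [Perm.coe_mul, ← Function.comp_assoc, hv]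
    have htail : Fin.tail (Fin.cons (v i) (i.removeNth v) ∘ extendTail ρ) = i.removeNth v ∘ ρ := by
      funext j; simp [Fin.tail]
    rw [hcomp, htail, hΦ, sgn_mul, sgn_inv, sgn_cycleRange, sgn_extendTail]
    simp only [Function.comp_apply, extendTail_zero, Fin.cons_zero]
    linear_combination ((-1) ^ (i : ℕ) * Φ (v i) (i.removeNth v)) * sgn_mul_self ρ
  rw [Finset.sum_congr rfl fun ρ _ => hterm ρ]
  simp [Finset.card_univ, Fintype.card_perm]

end Absorption

section Blocks

variable {α : Type*} {p k : ℕ}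

def blockApply (G : α → (Fin p → α) → (Fin k → α) → ℝ) (w : Fin (p + k + 1) → α) : ℝ :=
  G (w 0) (Fin.tail w ∘ Fin.castAdd k) (Fin.tail w ∘ Fin.natAdd p)

lemma altSum_comp_cast_cons_append (G : α → (Fin p → α) → (Fin k → α) → ℝ)
    (h : p + 1 + k = p + k + 1) (v : Fin (p + k + 1) → α) :
    altSum (fun w => G (w (Fin.castAdd k 0)) (Fin.tail (w ∘ Fin.castAdd k))
      (w ∘ Fin.natAdd (p + 1))) (v ∘ Fin.cast h) = altSum (blockApply G) v := by
  rw [altSum_comp_cast]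
  refine altSum_congr (fun w => ?_) v
  simp only [blockApply, Fin.tail, Function.comp_def]
  congr 2
  funext i
  congr 1
  ext
  simp only [Fin.val_cast, Fin.val_natAdd, Fin.val_succ]
  omega

lemma altSum_comp_cast_append_cons (G : α → (Fin p → α) → (Fin k → α) → ℝ)
    (h : p + (k + 1) = p + k + 1) (v : Fin (p + k + 1) → α) :
    altSum (fun w => G (w (Fin.natAdd p 0)) (w ∘ Fin.castAdd (k + 1))
      (Fin.tail (w ∘ Fin.natAdd p))) (v ∘ Fin.cast h) = (-1) ^ p * altSum (blockApply G) v := by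
  set s : Fin (p + k + 1) := ⟨p, by omega⟩
  have hs : (-1 : ℝ) ^ p = sgn s.cycleRange⁻¹ := by rw [sgn_inv, sgn_cycleRange]
  rw [altSum_comp_cast, hs, ← altSum_comp_perm]
  refine altSum_congr (fun w => ?_) v
  rw [Perm.inv_def, ← Fin.cons_removeNth_eq_comp_cycleRange_symm]
  simp only [blockApply, Fin.tail, Fin.removeNth, Fin.cons_zero, Fin.cons_succ, Function.comp_def]
  congr 2
  · funext i
    rw [Fin.succAbove_of_castSucc_lt _ _ (by simp [Fin.lt_def, s])]
    rfl
  · funext i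
    rw [Fin.succAbove_of_le_castSucc _ _ (by simp [Fin.le_def, s])]
    simp only [Fin.tail]
    congr 1

end Blocks

lemma removeNth_succ_cons {α : Type*} {k : ℕ} (i : Fin (k + 1)) (a : α) (u : Fin (k + 1) → α) :
    i.succ.removeNth (Fin.cons a u : Fin (k + 2) → α) = Fin.cons a (i.removeNth u) := by
  funext j
  refine Fin.cases ?_ (fun j => ?_) j
  · simp [Fin.removeNth]
  · simp [Fin.removeNth, Fin.succ_succAbove_succ]

section Forms

variable {Y : Type}

lemma IsAlt.apply_comp {k : ℕ} {β : Form Y k} (hβ : IsAlt β) (σ : Perm (Fin k))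
    (t : Fin k → Idx) (y : Y) : β (t ∘ σ) y = sgn σ * β t y :=
  congrFun (hβ σ t) y

lemma IsAlt.apply_update {k : ℕ} {β : Form Y (k + 1)} (hβ : IsAlt β) (u : Fin (k + 1) → Idx)
    (j : Fin (k + 1)) (b : Idx) (y : Y) :
    β (Function.update u j b) y = (-1) ^ (j : ℕ) * β (Fin.cons b (j.removeNth u)) y := by
  rw [← Fin.insertNth_removeNth, ← Fin.cons_comp_cycleRange, hβ.apply_comp, sgn_cycleRange]

lemma IsAlt.sub {k : ℕ} {β γ : Form Y k} (hβ : IsAlt β) (hγ : IsAlt γ) :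
    IsAlt (fun t y => β t y - γ t y) := fun σ t => by
  funext y
  simp [hβ.apply_comp, hγ.apply_comp, mul_sub]

lemma IsAlt.add {k : ℕ} {β γ : Form Y k} (hβ : IsAlt β) (hγ : IsAlt γ) :
    IsAlt (fun t y => β t y + γ t y) := fun σ t => by
  funext y
  simp [hβ.apply_comp, hγ.apply_comp, mul_add]

lemma IsAlt.mul_left {k : ℕ} {γ : Form Y k} (hγ : IsAlt γ) (c : Y → ℝ) :
    IsAlt fun t y => c y * γ t y := fun σ t => by
  funext y
  simp [hγ.apply_comp, mul_left_comm]

lemma isAlt_sum_mul {k : ℕ} {β : Idx → Form Y k} (hβ : ∀ b, IsAlt (β b)) (c : Idx → Y → ℝ) :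
    IsAlt (fun t y => ∑ b, c b y * β b t y) := fun σ t => by
  funext y
  simp [(hβ _).apply_comp, Finset.mul_sum, mul_left_comm]

lemma factorial_mul_wedge {k l : ℕ} (α : Form Y k) (β : Form Y l) (v : Fin (k + l) → Idx)
    (y : Y) :
    (k.factorial * l.factorial : ℝ) * wedge α β v y
      = altSum (fun w => α (w ∘ Fin.castAdd l) y * β (w ∘ Fin.natAdd k) y) v := by
  rw [wedge, ← mul_assoc, mul_one_div_cancel (by positivity), one_mul]
  rfl

lemma isAlt_wedge {k l : ℕ} (α : Form Y k) (β : Form Y l) : IsAlt (wedge α β) := fun σ v => by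
  funext y
  refine mul_left_cancel₀ (by positivity : (k.factorial * l.factorial : ℝ) ≠ 0) ?_
  rw [Pi.smul_apply, smul_eq_mul, mul_left_comm, factorial_mul_wedge, factorial_mul_wedge,
    altSum_apply_comp_perm]

lemma isAlt_contr {k : ℕ} {β : Form Y (k + 1)} (hβ : IsAlt β) (a : Idx) :
    IsAlt (contr β a) := fun σ t => by
  have h : (Fin.cons a (t ∘ σ) : Fin (k + 1) → Idx) = Fin.cons a t ∘ extendTail σ := by
    funext i
    refine Fin.cases ?_ (fun j => ?_) i <;> simp
  rw [contr, h, hβ, sgn_extendTail]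
  rfl

end Forms

section Derivations

variable {Y : Type} {D : (Y → ℝ) → Idx → Y → ℝ}

lemma deriv_sum (hD : ∀ x, IsLinearMap ℝ (D · x)) {ι : Type*} (s : Finset ι) (f : ι → Y → ℝ)
    (x : Idx) : D (fun y => ∑ i ∈ s, f i y) x = fun y => ∑ i ∈ s, D (f i) x y := by
  simpa [Finset.sum_fn] using map_sum (IsLinearMap.mk' _ (hD x)) f s

lemma deriv_const_mul (hD : ∀ x, IsLinearMap ℝ (D · x)) (c : ℝ) (f : Y → ℝ) (x : Idx) :
    D (fun y => c * f y) x = fun y => c * D f x y :=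
  (hD x).map_smul c f

lemma deriv_altSum (hD : ∀ x, IsLinearMap ℝ (D · x)) {m : ℕ} (Ψ : (Fin m → Idx) → Y → ℝ)
    (t : Fin m → Idx) (x : Idx) :
    D (fun y => altSum (fun z => Ψ z y) t) x = fun y => altSum (fun z => D (Ψ z) x y) t := by
  simp only [altSum, deriv_sum hD, deriv_const_mul hD]

lemma IsAlt.deriv (hD : ∀ x, IsLinearMap ℝ (D · x)) {k : ℕ} {β : Form Y k} (hβ : IsAlt β)
    (x : Idx) : IsAlt fun t => D (β t) x := fun σ t => by
  show D (β (t ∘ σ)) x = _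
  rw [hβ σ t]
  exact (hD x).map_smul _ _

lemma dS_sum (hD : ∀ x, IsLinearMap ℝ (D · x)) {k : ℕ} (β : Idx → Form Y k) :
    dS D (fun v y => ∑ a, β a v y) = fun v y => ∑ a, dS D (β a) v y := by
  funext v y
  simp only [dS, deriv_sum hD, Finset.mul_sum]
  exact Finset.sum_comm

end Derivations

section FrameWedge

variable {Y : Type}

/-- `frameWedge Φ = e^x ∧ Φ_x` for the coframe `e` dual to the frame. -/
def frameWedge {k : ℕ} (Φ : Idx → Form Y k) : Form Y (k + 1) :=
  fun v y => ∑ i : Fin (k + 1), (-1) ^ (i : ℕ) * Φ (v i) (i.removeNth v) y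

lemma dS_eq_frameWedge (D : (Y → ℝ) → Idx → Y → ℝ) {k : ℕ} (γ : Form Y k) :
    dS D γ = frameWedge fun x t => D (γ t) x :=
  rfl

variable {p k : ℕ}

lemma factorial_mul_frameWedge {Φ : Idx → Form Y k} (hΦ : ∀ x, IsAlt (Φ x))
    (v : Fin (k + 1) → Idx) (y : Y) :
    (k.factorial : ℝ) * frameWedge Φ v y = altSum (fun z => Φ (z 0) (Fin.tail z) y) v :=
  (altSum_cons_tail (Φ := fun x t => Φ x t y) (fun x σ t => (hΦ x).apply_comp σ t y) v).symm

lemma factorial_mul_frameWedge_wedge {Φ : Idx → Form Y p} (hΦ : ∀ x, IsAlt (Φ x))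
    (β : Form Y k) (h : p + 1 + k = p + k + 1) (v : Fin (p + k + 1) → Idx) (y : Y) :
    (p.factorial * k.factorial : ℝ) * wedge (frameWedge Φ) β (v ∘ Fin.cast h) y
      = altSum (blockApply fun x u t => Φ x u y * β t y) v := by
  refine mul_left_cancel₀ (by positivity : ((p + 1).factorial : ℝ) ≠ 0) ?_
  calc _ = p.factorial * (((p + 1).factorial * k.factorial : ℝ)
          * wedge (frameWedge Φ) β (v ∘ Fin.cast h) y) := by ring
    _ = altSum (fun w => altSum (fun z => Φ (z 0) (Fin.tail z) y) (w ∘ Fin.castAdd k)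
          * β (w ∘ Fin.natAdd (p + 1)) y) (v ∘ Fin.cast h) := by
      rw [factorial_mul_wedge, ← altSum_const_mul]
      refine altSum_congr (fun w => ?_) _
      rw [← mul_assoc, factorial_mul_frameWedge hΦ]
    _ = _ := (altSum_altSum_mul_left (fun z => Φ (z 0) (Fin.tail z) y) (β · y) _).trans
        (congrArg _ (altSum_comp_cast_cons_append (fun x u t => Φ x u y * β t y) h v))

lemma factorial_mul_wedge_frameWedge (α : Form Y p) {Φ : Idx → Form Y k}
    (hΦ : ∀ x, IsAlt (Φ x)) (h : p + (k + 1) = p + k + 1) (v : Fin (p + k + 1) → Idx) (y : Y) :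
    (p.factorial * k.factorial : ℝ) * wedge α (frameWedge Φ) (v ∘ Fin.cast h) y
      = (-1) ^ p * altSum (blockApply fun x u t => α u y * Φ x t y) v := by
  refine mul_left_cancel₀ (by positivity : ((k + 1).factorial : ℝ) ≠ 0) ?_
  calc _ = k.factorial * ((p.factorial * (k + 1).factorial : ℝ)
          * wedge α (frameWedge Φ) (v ∘ Fin.cast h) y) := by ring
    _ = altSum (fun w => α (w ∘ Fin.castAdd (k + 1)) y
          * altSum (fun z => Φ (z 0) (Fin.tail z) y) (w ∘ Fin.natAdd p)) (v ∘ Fin.cast h) := by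
      rw [factorial_mul_wedge, ← altSum_const_mul]
      refine altSum_congr (fun w => ?_) _
      rw [mul_left_comm, factorial_mul_frameWedge hΦ]
    _ = _ := (altSum_mul_altSum_right (α · y) (fun z => Φ (z 0) (Fin.tail z) y) _).trans
        (congrArg _ (altSum_comp_cast_append_cons (fun x u t => α u y * Φ x t y) h v))

end FrameWedge

section Pieces

variable {Y : Type} {D : (Y → ℝ) → Idx → Y → ℝ} {p k : ℕ}

lemma factorial_mul_deriv_wedge (hD : ∀ x, IsLinearMap ℝ (D · x)) (α : Form Y p) (β : Form Y k)
    (t : Fin (p + k) → Idx) (x : Idx) (y : Y) :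
    (p.factorial * k.factorial : ℝ) * D (wedge α β t) x y
      = altSum (fun s => D (fun y => α (s ∘ Fin.castAdd k) y * β (s ∘ Fin.natAdd p) y) x y) t := by
  have hw : wedge α β t = fun y => 1 / (p.factorial * k.factorial : ℝ) *
      altSum (fun s => α (s ∘ Fin.castAdd k) y * β (s ∘ Fin.natAdd p) y) t := rfl
  rw [hw, deriv_const_mul hD, deriv_altSum hD, ← mul_assoc, mul_one_div_cancel (by positivity),
    one_mul]

lemma factorial_mul_dS_wedge (hD : ∀ x, IsLinearMap ℝ (D · x))
    (hD_mul : ∀ (f g : Y → ℝ) (a : Idx), D (f * g) a = f * D g a + g * D f a)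
    (α : Form Y p) (β : Form Y k) (v : Fin (p + k + 1) → Idx) (y : Y) :
    (p.factorial * k.factorial : ℝ) * dS D (wedge α β) v y
      = altSum (blockApply fun x u t => α u y * D (β t) x y + β t y * D (α u) x y) v := by
  refine mul_left_cancel₀ (by positivity : ((p + k).factorial : ℝ) ≠ 0) ?_
  calc _ = p.factorial * k.factorial * ((p + k).factorial * dS D (wedge α β) v y) := by ring
    _ = altSum (fun z => altSum (fun s => D (fun y => α (s ∘ Fin.castAdd k) y
          * β (s ∘ Fin.natAdd p) y) (z 0) y) (Fin.tail z)) v := by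
      rw [dS_eq_frameWedge, factorial_mul_frameWedge ((isAlt_wedge α β).deriv hD),
        ← altSum_const_mul]
      exact altSum_congr (fun z => factorial_mul_deriv_wedge hD α β _ _ y) v
    _ = _ := by
      rw [altSum_altSum_tail (fun x s => D (fun y => α (s ∘ Fin.castAdd k) y
        * β (s ∘ Fin.natAdd p) y) x y)]
      refine congrArg _ (altSum_congr (fun z => ?_) v)
      exact congrFun (hD_mul _ _ _) y

lemma factorial_mul_dS_insertF (hD : ∀ x, IsLinearMap ℝ (D · x))
    (hD_mul : ∀ (f g : Y → ℝ) (a : Idx), D (f * g) a = f * D g a + g * D f a)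
    (M : Idx → Form Y p) (β : Form Y (k + 1)) (v : Fin (p + k + 1) → Idx) (y : Y) :
    (p.factorial * k.factorial : ℝ) * dS D (insertF M β) v y
      = altSum (blockApply fun x u t =>
          ∑ a, (M a u y * D (contr β a t) x y + contr β a t y * D (M a u) x y)) v := by
  rw [show insertF M β = fun v y => ∑ a, wedge (M a) (contr β a) v y from rfl, dS_sum hD,
    Finset.mul_sum]
  simp only [factorial_mul_dS_wedge hD hD_mul]
  exact (altSum_sum _ _ v).symm

lemma contr_dS (D : (Y → ℝ) → Idx → Y → ℝ) (β : Form Y (k + 1)) (a : Idx)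
    (u : Fin (k + 1) → Idx) (y : Y) :
    contr (dS D β) a u y = D (β u) a y - dS D (contr β a) u y := by
  rw [dS_eq_frameWedge, dS_eq_frameWedge, contr, frameWedge, Fin.sum_univ_succ]
  simp only [frameWedge, contr, Fin.removeNth_zero, Fin.tail_cons, removeNth_succ_cons,
    Fin.cons_zero, Fin.cons_succ, Fin.val_zero, Fin.val_succ, pow_zero, pow_succ]
  simp [Finset.sum_neg_distrib, sub_eq_add_neg]

lemma deriv_eq_frameWedge_of_covD_eq_zero {Γ : Idx → Idx → Idx → Y → ℝ} {β : Form Y (k + 1)}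
    (hβ : IsAlt β) {a : Idx} (hpar : covD D Γ a β = 0) :
    (fun u => D (β u) a) = frameWedge fun x t y => ∑ b, Γ a x b y * contr β b t y := by
  funext u y
  have h := congrFun (congrFun hpar u) y
  rw [covD, Pi.zero_apply, Pi.zero_apply, sub_eq_zero] at h
  simp only [h, frameWedge, contr, hβ.apply_update, Finset.mul_sum]
  exact Finset.sum_congr rfl fun j _ => Finset.sum_congr rfl fun b _ => by ring

lemma contr_dS_eq_frameWedge {Γ : Idx → Idx → Idx → Y → ℝ}
    {β : Form Y (k + 1)} (hβ : IsAlt β) {a : Idx} (hpar : covD D Γ a β = 0) :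
    contr (dS D β) a
      = frameWedge fun x t y => ∑ b, Γ a x b y * contr β b t y - D (contr β a t) x y := by
  funext u y
  have hDβ := congrFun (congrFun (deriv_eq_frameWedge_of_covD_eq_zero hβ hpar) u) y
  rw [contr_dS, hDβ, dS_eq_frameWedge]
  simp only [frameWedge, mul_sub, Finset.sum_sub_distrib]

lemma factorial_mul_insertF_dS_of_covD_eq_zero (hD : ∀ x, IsLinearMap ℝ (D · x))
    {Γ : Idx → Idx → Idx → Y → ℝ} (M : Idx → Form Y p) {β : Form Y (k + 1)} (hβ : IsAlt β)
    (hpar : ∀ a, covD D Γ a β = 0) (h : p + (k + 1) = p + k + 1) (v : Fin (p + k + 1) → Idx)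
    (y : Y) :
    (p.factorial * k.factorial : ℝ) * ((-1) ^ p * castF h (insertF M (dS D β)) v y)
      = altSum (blockApply fun x u t =>
          ∑ a, M a u y * (∑ b, Γ a x b y * contr β b t y - D (contr β a t) x y)) v := by
  have hΦ : ∀ a x, IsAlt fun t y => ∑ b, Γ a x b y * contr β b t y - D (contr β a t) x y :=
    fun a x => (isAlt_sum_mul (isAlt_contr hβ) _).sub ((isAlt_contr hβ a).deriv hD x)
  have hterm : ∀ a, (p.factorial * k.factorial : ℝ) * ((-1) ^ p
      * wedge (M a) (contr (dS D β) a) (v ∘ Fin.cast h) y)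
      = altSum (blockApply fun x u t =>
          M a u y * (∑ b, Γ a x b y * contr β b t y - D (contr β a t) x y)) v := fun a => by
    rw [mul_left_comm, contr_dS_eq_frameWedge hβ (hpar a),
      factorial_mul_wedge_frameWedge _ (hΦ a) h, ← mul_assoc, ← mul_pow, neg_one_mul, neg_neg,
      one_pow, one_mul]
  simp only [castF, insertF, Finset.mul_sum]
  simp only [← Function.comp_def, hterm]
  exact (altSum_sum _ _ v).symm

lemma castF_wedge_thetaOne (Γ : Idx → Idx → Idx → Y → ℝ) (a b : Idx) {γ : Form Y p}
    (hγ : IsAlt γ) (h : 1 + p = p + 1) :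
    castF h (wedge (thetaOne Γ a b) γ) = frameWedge fun x t y => Γ a x b y * γ t y := by
  funext u y
  refine mul_left_cancel₀ (by positivity : ((1 : ℕ).factorial * p.factorial : ℝ) ≠ 0) ?_
  rw [castF, ← Function.comp_def, factorial_mul_wedge, Nat.factorial_one, Nat.cast_one, one_mul,
    factorial_mul_frameWedge (fun x => hγ.mul_left _), altSum_comp_cast]
  refine altSum_congr (fun w => ?_) u
  have htail : (w ∘ Fin.cast h) ∘ Fin.natAdd 1 = Fin.tail w := by
    funext i
    exact congrArg w (Fin.ext (by simp))
  rw [htail]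
  rfl

lemma dTheta_eq_frameWedge (Γ : Idx → Idx → Idx → Y → ℝ) {M : Idx → Form Y p}
    (hM : ∀ a, IsAlt (M a)) (b : Idx) :
    dTheta D Γ M b = frameWedge fun x t y => D (M b t) x y + ∑ a, Γ a x b y * M a t y := by
  funext u y
  have hθ : castF (show 1 + p = p + 1 by omega)
      (fun v y => ∑ a, wedge (thetaOne Γ a b) (M a) v y) u y
      = ∑ a, frameWedge (fun x t y => Γ a x b y * M a t y) u y := by
    simp only [← castF_wedge_thetaOne Γ _ b (hM _) (show 1 + p = p + 1 by omega)]
    rfl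
  rw [dTheta, Pi.add_apply, Pi.add_apply, hθ, dS_eq_frameWedge]
  simp only [frameWedge, Finset.mul_sum, mul_add, Finset.sum_add_distrib]
  rw [Finset.sum_comm]

lemma factorial_mul_insertF_dTheta (hD : ∀ x, IsLinearMap ℝ (D · x))
    (Γ : Idx → Idx → Idx → Y → ℝ) {M : Idx → Form Y p} (hM : ∀ a, IsAlt (M a))
    (β : Form Y (k + 1)) (h : p + 1 + k = p + k + 1) (v : Fin (p + k + 1) → Idx) (y : Y) :
    (p.factorial * k.factorial : ℝ) * castF h (insertF (dTheta D Γ M) β) v y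
      = altSum (blockApply fun x u t =>
          ∑ b, (D (M b u) x y + ∑ a, Γ a x b y * M a u y) * contr β b t y) v := by
  have hΦ : ∀ b x, IsAlt fun t y => D (M b t) x y + ∑ a, Γ a x b y * M a t y :=
    fun b x => ((hM b).deriv hD x).add (isAlt_sum_mul hM _)
  simp only [castF, insertF, Finset.mul_sum, dTheta_eq_frameWedge Γ hM]
  simp only [← Function.comp_def, factorial_mul_frameWedge_wedge (hΦ _)]
  exact (altSum_sum _ _ v).symm

end Pieces

/-- If `∇` is a metric connection and `λ` a `k`-form with
`∇λ = 0`, then the Nijenhuis–Lie derivative of `λ` along `M ∈ Λ^p(Y,TY)` is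
`L_M(λ) = [d, i_M](λ) = i_{d_θ M}(λ)`, with `θ_a{}^b = Γ_{ac}{}^b dx^c`. -/
theorem nijenhuis_lie_of_parallel_form {Y : Type}
    (D : (Y → ℝ) → Idx → Y → ℝ)
    (hD_add : ∀ (f g : Y → ℝ) (a : Idx), D (f + g) a = D f a + D g a)
    (hD_mul : ∀ (f g : Y → ℝ) (a : Idx), D (f * g) a = f * D g a + g * D f a)
    (hD_smul : ∀ (c : ℝ) (f : Y → ℝ) (a : Idx), D (c • f) a = c • D f a)
    (Γ : Idx → Idx → Idx → Y → ℝ)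
    (g : Idx → Idx → Y → ℝ)
    (p k : ℕ) (M : Idx → Form Y p) (hM : ∀ a, IsAlt (M a))
    (lam : Form Y (k + 1)) (hlam : IsAlt lam)
    (hpar : ∀ a : Idx, covD D Γ a lam = 0) :
    dS D (insertF M lam)
      + ((-1 : ℝ) ^ p) •
          castF (show p + (k + 1) = (p + k) + 1 by omega) (insertF M (dS D lam))
      = castF (show (p + 1) + k = (p + k) + 1 by omega)
          (insertF (dTheta D Γ M) lam) := by
  have hD : ∀ x, IsLinearMap ℝ (D · x) := fun x => ⟨(hD_add · · x), (hD_smul · · x)⟩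
  funext v y
  refine mul_left_cancel₀ (by positivity : (p.factorial * k.factorial : ℝ) ≠ 0) ?_
  rw [Pi.add_apply, Pi.add_apply, Pi.smul_apply, Pi.smul_apply, smul_eq_mul, mul_add,
    factorial_mul_dS_insertF hD hD_mul, factorial_mul_insertF_dS_of_covD_eq_zero hD M hlam hpar,
    factorial_mul_insertF_dTheta hD Γ hM, ← altSum_add]
  refine altSum_congr (fun w => ?_) v
  -- the `M^a D_x λ_a` terms cancel; the `Γ` terms match after swapping the sums over `a`, `b`
  simp only [blockApply, mul_sub, Finset.mul_sum, add_mul, Finset.sum_mul, Finset.sum_add_distrib,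
    Finset.sum_sub_distrib]
  rw [Finset.sum_comm (f := fun a b => M a _ y * (Γ a _ b y * contr lam b _ y))]
  simp only [mul_comm, mul_left_comm]
  ring

end
end G2S
end

section
/- Let z ∈ Λ¹(Y, T*Y) be such that the associated matrix z_{ab} = (z_a)_b is antisymmetric, and let z denote also the 2-form (1/2) z_{ab} dx^{ab}. Then d_θ z_a = −(dz)_a + (1/2)(∇_a z_{bc}) dx^{bc}. If moreover z ∈ Λ²_14, then (d_θ z_a + (dz)_a) ⌟ φ = 0. -/
open scoped BigOperators

namespace G2S

noncomputable section

def kd (a b : Idx) : ℝ := if a = b then 1 else 0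

/-- Levi-Civita symbol on seven indices. -/
def epsF (v : Fin 7 → Idx) : ℝ :=
  ∑ σ : Equiv.Perm (Fin 7), sgn σ * ∏ i : Fin 7, kd (v i) (σ i)

def phiList : List ((Idx × Idx × Idx) × ℝ) :=
  [((0,1,2),1), ((0,3,4),1), ((0,5,6),1), ((1,3,5),1), ((1,4,6),-1), ((2,3,6),-1), ((2,4,5),-1)]

/-- Components of the standard `G₂` associative three-form `φ` on `ℝ⁷`
(`φ = e^{123}+e^{145}+e^{167}+e^{246}-e^{257}-e^{347}-e^{356}`). -/
def phiF (a b c : Idx) : ℝ :=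
  ∑ σ : Equiv.Perm (Fin 3), sgn σ *
    (phiList.map (fun t =>
      if (![a,b,c] (σ 0), ![a,b,c] (σ 1), ![a,b,c] (σ 2)) = t.1 then t.2 else 0)).sum

/-- Components of the coassociative four-form `ψ = *φ`. -/
def psiF (a b c d : Idx) : ℝ :=
  (1 / 6 : ℝ) * ∑ e : Idx, ∑ f : Idx, ∑ g : Idx,
    epsF ![a,b,c,d,e,f,g] * phiF e f g

def Phi (Y : Type) : Form Y 3 := fun v _ => phiF (v 0) (v 1) (v 2)

def Psi (Y : Type) : Form Y 4 := fun v _ => psiF (v 0) (v 1) (v 2) (v 3)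

/-- `d_θ` on a `T*Y`-valued one-form `z` (lower index):
`d_θ z_a = d(z_a) − θ_a{}^b ∧ z_b`. -/
def dThetaLow {Y : Type} (D : (Y → ℝ) → Idx → Y → ℝ)
    (Γ : Idx → Idx → Idx → Y → ℝ) (z : Idx → Form Y 1) (a : Idx) : Form Y 2 :=
  dS D (z a) - ((fun v y => ∑ e : Idx, wedge (thetaOne Γ a e) (z e) v y) : Form Y 2)

/-!
Antisymmetry of `z` turns the connection terms of `d_θ z_a` into those of `∇_a z`, which gives
the first identity, and with it `d_θ z_a + (dz)_a = ∇_a z`. Compatibility says that each `Γ_a`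
lies in `𝔤₂`. Contracting that condition with `φ` and using the quadratic identities of `φ`
shows first `𝔤₂ ⊆ 𝔰𝔬(7)`, and then that `𝔤₂` preserves the kernel `Λ²₁₄` of `z ↦ z ⌟ φ`;
the derivative part of `∇_a z ⌟ φ` is `D_a (z ⌟ φ) = 0`.
-/

open scoped Matrix

/-- An integer copy of `phiF`: identities of `φ` are checked on it by `decide`. -/
def phiZ (a b c : Idx) : ℤ :=
  ∑ σ : Equiv.Perm (Fin 3), (Equiv.Perm.sign σ : ℤ) *
    (([((0,1,2),1), ((0,3,4),1), ((0,5,6),1), ((1,3,5),1), ((1,4,6),-1), ((2,3,6),-1),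
        ((2,4,5),-1)] : List ((Idx × Idx × Idx) × ℤ)).map (fun t =>
      if (![a,b,c] (σ 0), ![a,b,c] (σ 1), ![a,b,c] (σ 2)) = t.1 then t.2 else 0)).sum

lemma phiF_eq_cast (a b c : Idx) : phiF a b c = phiZ a b c := by
  simp only [phiF, phiZ, sgn, phiList, List.map_cons, List.map_nil, List.sum_cons, List.sum_nil]
  push_cast
  rfl

lemma phiF_swap (a b c : Idx) : phiF a b c = -phiF a c b := by
  have h : ∀ a b c : Idx, phiZ a b c = -phiZ a c b := by decide
  simp only [phiF_eq_cast, h a b c, Int.cast_neg]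

lemma sum_phiF_mul_phiF (b b' : Idx) :
    ∑ c, ∑ d, phiF b c d * phiF b' c d = 6 * kd b b' := by
  have h : ∀ b b' : Idx, ∑ c, ∑ d, phiZ b c d * phiZ b' c d = 6 * if b = b' then 1 else 0 := by
    decide
  simpa [phiF_eq_cast, kd] using congrArg (Int.cast (R := ℝ)) (h b b')

lemma sum_phiF_mul_phiF_add_swap (b e c b' : Idx) :
    ∑ d, (phiF b e d * phiF b' c d + phiF b' e d * phiF b c d)
      = 2 * kd b b' * kd e c - kd b c * kd e b' - kd b' c * kd e b := by
  have h : ∀ b e c b' : Idx, ∑ d, (phiZ b e d * phiZ b' c d + phiZ b' e d * phiZ b c d)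
      = 2 * (if b = b' then 1 else 0) * (if e = c then 1 else 0)
        - (if b = c then 1 else 0) * (if e = b' then 1 else 0)
        - (if b' = c then 1 else 0) * (if e = b then 1 else 0) := by
    decide
  simpa [phiF_eq_cast, kd] using congrArg (Int.cast (R := ℝ)) (h b e c b')

lemma sum_mul_sum_phiF_mul_phiF_add_swap (G : Matrix Idx Idx ℝ) (b b' : Idx) :
    (∑ c, ∑ e, G c e * ∑ d, phiF b e d * phiF b' c d)
      + ∑ c, ∑ e, G c e * ∑ d, phiF b' e d * phiF b c d
      = 2 * kd b b' * G.trace - G b b' - G b' b := by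
  simp only [← Finset.sum_add_distrib, ← mul_add, sum_phiF_mul_phiF_add_swap]
  simp [kd, Matrix.trace, mul_sub, Finset.sum_sub_distrib, Finset.mul_sum, mul_comm]

/-- `G ∈ 𝔤₂`: the derivation of `Λ³` induced by `G` kills `φ`. -/
def AnnihilatesPhi (G : Matrix Idx Idx ℝ) : Prop :=
  ∀ b c d, ∑ e, (G b e * phiF e c d + G c e * phiF b e d + G d e * phiF b c e) = 0

namespace AnnihilatesPhi

variable {G : Matrix Idx Idx ℝ}

lemma contract_phiF (hG : AnnihilatesPhi G) (b b' : Idx) :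
    6 * G b b' + 2 * ∑ c, ∑ e, G c e * ∑ d, phiF b e d * phiF b' c d = 0 := by
  have h₀ : ∑ c, ∑ d, phiF b' c d *
      ∑ e, (G b e * phiF e c d + G c e * phiF b e d + G d e * phiF b c e) = 0 := by
    simp only [hG b, mul_zero, Finset.sum_const_zero]
  have h₁ : ∑ c, ∑ d, phiF b' c d * ∑ e, G b e * phiF e c d = 6 * G b b' := by
    calc _ = ∑ e, G b e * ∑ c, ∑ d, phiF e c d * phiF b' c d := by
          simp_rw [Finset.mul_sum]
          rw [Finset.sum_comm_cycle]
          exact Finset.sum_congr rfl fun e _ => Finset.sum_congr rfl fun c _ =>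
            Finset.sum_congr rfl fun d _ => by ring
      _ = 6 * G b b' := by simp [sum_phiF_mul_phiF, kd, mul_comm]
  have h₂ : ∑ c, ∑ d, phiF b' c d * ∑ e, G c e * phiF b e d
      = ∑ c, ∑ e, G c e * ∑ d, phiF b e d * phiF b' c d := by
    simp only [Finset.mul_sum]
    refine Finset.sum_congr rfl fun c _ => ?_
    rw [Finset.sum_comm]
    exact Finset.sum_congr rfl fun e _ => Finset.sum_congr rfl fun d _ => by ring
  have h₃ : ∑ c, ∑ d, phiF b' c d * ∑ e, G d e * phiF b c e
      = ∑ c, ∑ d, phiF b' c d * ∑ e, G c e * phiF b e d := by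
    rw [Finset.sum_comm]
    refine Finset.sum_congr rfl fun c _ => Finset.sum_congr rfl fun d _ => ?_
    rw [phiF_swap b' d c, Finset.mul_sum, Finset.mul_sum]
    exact Finset.sum_congr rfl fun e _ => by rw [phiF_swap b d e]; ring
  simp only [Finset.sum_add_distrib, mul_add] at h₀
  rw [h₁, h₃, h₂] at h₀
  linarith

/-- Symmetrising `contract_phiF` gives `G + Gᵀ = -(tr G) • 1`; taking the trace, `tr G = 0`. -/
lemma transpose_eq_neg (hG : AnnihilatesPhi G) : Gᵀ = -G := by
  have hsymm : ∀ b b', G b b' + G b' b = -(kd b b' * G.trace) := fun b b' => by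
    linarith [sum_mul_sum_phiF_mul_phiF_add_swap G b b', hG.contract_phiF b b',
      hG.contract_phiF b' b]
  have htrace : G.trace = 0 := by
    have h : G.trace + G.trace = -(7 * G.trace) :=
      calc G.trace + G.trace = ∑ b, (G b b + G b b) := Finset.sum_add_distrib.symm
        _ = ∑ b, -(kd b b * G.trace) := Finset.sum_congr rfl fun b _ => hsymm b b
        _ = -(7 * G.trace) := by simp [kd]
    linarith
  ext b b'
  simp only [Matrix.transpose_apply, Matrix.neg_apply]
  have h := hsymm b' b
  rw [htrace, mul_zero, neg_zero] at h
  linarith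

end AnnihilatesPhi

/-- Twice `Z ⌟ φ`; on antisymmetric `Z` its kernel is `Λ²₁₄`. -/
def phiContr : Matrix Idx Idx ℝ →ₗ[ℝ] Idx → ℝ where
  toFun Z c := ∑ p, ∑ q, Z p q * phiF p q c
  map_add' Z W := by ext c; simp [add_mul, Finset.sum_add_distrib]
  map_smul' r Z := by ext c; simp [Finset.mul_sum, mul_assoc]

lemma phiContr_apply (Z : Matrix Idx Idx ℝ) (c : Idx) :
    phiContr Z c = ∑ p, ∑ q, Z p q * phiF p q c := rfl

/-- For `Gᵀ = -G`, `Gᵀ * Z + Z * G = -⁅G, Z⁆` is the action of `G` on two-forms. -/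
lemma AnnihilatesPhi.phiContr_transpose_mul_add_mul {G Z : Matrix Idx Idx ℝ}
    (hG : AnnihilatesPhi G) (hZ : phiContr Z = 0) : phiContr (Gᵀ * Z + Z * G) = 0 := by
  ext c
  have h₀ : ∑ p, ∑ q, Z p q *
      ∑ e, (G p e * phiF e q c + G q e * phiF p e c + G c e * phiF p q e) = 0 :=
    Finset.sum_eq_zero fun p _ => Finset.sum_eq_zero fun q _ => by rw [hG, mul_zero]
  have h₁ : ∑ p, ∑ q, ∑ e, Z p q * (G p e * phiF e q c) = phiContr (Gᵀ * Z) c := by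
    simp only [phiContr_apply, Matrix.mul_apply, Matrix.transpose_apply, Finset.sum_mul]
    rw [Finset.sum_comm_cycle]
    refine Finset.sum_congr rfl fun e _ => ?_
    rw [Finset.sum_comm]
    exact Finset.sum_congr rfl fun q _ => Finset.sum_congr rfl fun p _ => by ring
  have h₂ : ∑ p, ∑ q, ∑ e, Z p q * (G q e * phiF p e c) = phiContr (Z * G) c := by
    simp only [phiContr_apply, Matrix.mul_apply, Finset.sum_mul]
    refine Finset.sum_congr rfl fun p _ => ?_
    rw [Finset.sum_comm]
    exact Finset.sum_congr rfl fun e _ => Finset.sum_congr rfl fun q _ => by ring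
  have h₃ : ∑ p, ∑ q, ∑ e, Z p q * (G c e * phiF p q e) = 0 := by
    rw [Finset.sum_comm_cycle]
    refine Finset.sum_eq_zero fun e _ => ?_
    have h := congrFun hZ e
    rw [phiContr_apply, Pi.zero_apply] at h
    simp only [mul_left_comm (Z _ _), ← Finset.mul_sum, h, mul_zero]
  simp only [Finset.mul_sum, mul_add, Finset.sum_add_distrib, h₁, h₂, h₃, add_zero] at h₀
  rw [map_add, Pi.add_apply, h₀, Pi.zero_apply]

section Components

variable {Y : Type} (D : (Y → ℝ) → Idx → Y → ℝ) (Γ : Idx → Idx → Idx → Y → ℝ)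

lemma dS_one (ω : Form Y 1) (v : Fin 2 → Idx) (y : Y) :
    dS D ω v y = D (ω ![v 1]) (v 0) y - D (ω ![v 0]) (v 1) y := by
  have h₀ : (fun j => v ((0 : Fin 2).succAbove j)) = ![v 1] := by ext j; fin_cases j; rfl
  have h₁ : (fun j => v ((1 : Fin 2).succAbove j)) = ![v 0] := by ext j; fin_cases j; rfl
  change ∑ i : Fin 2, _ = _
  simp only [Fin.sum_univ_two, h₀, h₁]
  norm_num
  ring

lemma dS_two (α : Form Y 2) (v : Fin 3 → Idx) (y : Y) :
    dS D α v y = D (α ![v 1, v 2]) (v 0) y - D (α ![v 0, v 2]) (v 1) y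
      + D (α ![v 0, v 1]) (v 2) y := by
  have h₀ : (fun j => v ((0 : Fin 3).succAbove j)) = ![v 1, v 2] := by
    ext j; fin_cases j <;> rfl
  have h₁ : (fun j => v ((1 : Fin 3).succAbove j)) = ![v 0, v 2] := by
    ext j; fin_cases j <;> rfl
  have h₂ : (fun j => v ((2 : Fin 3).succAbove j)) = ![v 0, v 1] := by
    ext j; fin_cases j <;> rfl
  change ∑ i : Fin 3, _ = _
  simp only [Fin.sum_univ_three, h₀, h₁, h₂]
  norm_num
  ring

lemma wedge_one_one (ω η : Form Y 1) (v : Fin 2 → Idx) (y : Y) :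
    wedge ω η v y = ω ![v 0] y * η ![v 1] y - ω ![v 1] y * η ![v 0] y := by
  have hterm : ∀ σ : Equiv.Perm (Fin 2),
      ω (fun i => v (σ (Fin.castAdd 1 i))) y * η (fun j => v (σ (Fin.natAdd 1 j))) y
        = ω ![v (σ 0)] y * η ![v (σ 1)] y := fun σ => by
    congr <;> ext i <;> fin_cases i <;> rfl
  have huniv : (Finset.univ : Finset (Equiv.Perm (Fin 2))) = {1, Equiv.swap 0 1} := by decide
  change 1 / ((Nat.factorial 1 : ℝ) * (Nat.factorial 1 : ℝ))
    * ∑ σ : Equiv.Perm (Fin 2), sgn σ * _ = _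
  rw [huniv, Finset.sum_pair (by decide)]
  simp only [hterm, sgn, Equiv.Perm.sign_one, Equiv.Perm.sign_swap (by decide : (0 : Fin 2) ≠ 1)]
  simp
  ring

lemma hook_two_Phi (α : Form Y 2) (w : Fin 1 → Idx) (y : Y) :
    hook (k := 2) (m := 1) α (Phi Y) w y
      = phiContr (Matrix.of fun p q => α ![p, q] y) (w 0) / 2 := by
  have hPhi : ∀ p q, Phi Y (Fin.append ![p, q] w) y = phiF p q (w 0) := fun p q => rfl
  rw [hook, ← (finTwoArrowEquiv Idx).symm.sum_comp, Fintype.sum_prod_type]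
  simp only [finTwoArrowEquiv_symm_apply, hPhi, Nat.factorial_two]
  simp only [phiContr_apply, Matrix.of_apply]
  ring

lemma covD_two (a : Idx) (α : Form Y 2) (v : Fin 2 → Idx) (y : Y) :
    covD D Γ a α v y = D (α v) a y
      - ∑ e, (Γ a (v 0) e y * α ![e, v 1] y + Γ a (v 1) e y * α ![v 0, e] y) := by
  have h₀ : ∀ e, Function.update v 0 e = ![e, v 1] := fun e => by
    ext i; fin_cases i <;> simp
  have h₁ : ∀ e, Function.update v 1 e = ![v 0, e] := fun e => by
    ext i; fin_cases i <;> simp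
  simp only [covD, Fin.sum_univ_two, h₀, h₁, Finset.sum_add_distrib]

lemma dThetaLow_eq_neg_contr_dS_add_covD (z : Idx → Form Y 1)
    (hz : ∀ (a b : Idx) (y : Y), z a ![b] y = -(z b ![a] y)) (a : Idx) :
    dThetaLow D Γ z a = -(contr (dS D ((fun v y => z (v 0) ![v 1] y) : Form Y 2)) a)
      + covD D Γ a ((fun v y => z (v 0) ![v 1] y) : Form Y 2) := by
  ext v y
  have hv : (Fin.cons a v : Fin 3 → Idx) 2 = v 1 := rfl
  have hΓ : ∑ e, Γ a (v 1) e y * z (v 0) ![e] y = -∑ e, Γ a (v 1) e y * z e ![v 0] y := by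
    simp only [hz (v 0), mul_neg, Finset.sum_neg_distrib]
  simp only [dThetaLow, contr, Pi.sub_apply, Pi.add_apply, Pi.neg_apply, dS_one, dS_two,
    covD_two, wedge_one_one, thetaOne, hv]
  simp [Finset.sum_sub_distrib, Finset.sum_add_distrib, hΓ]
  ring

/-- `D` is only additive, hence `ℤ`-linear, which suffices: the components of `φ` are integers. -/
lemma phiContr_deriv_comm (hD_add : ∀ (f g : Y → ℝ) (a : Idx), D (f + g) a = D f a + D g a)
    (F : Idx → Idx → Y → ℝ) (a c : Idx) (y : Y) :
    phiContr (Matrix.of fun p q => D (F p q) a y) c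
      = D (fun y' => phiContr (Matrix.of fun p q => F p q y') c) a y := by
  let L : (Y → ℝ) →+ (Y → ℝ) := AddMonoidHom.mk' (D · a) (hD_add · · a)
  have hsum : (fun y' => phiContr (Matrix.of fun p q => F p q y') c)
      = ∑ p, ∑ q, phiZ p q c • F p q := by
    ext y'
    simp [phiContr_apply, phiF_eq_cast, mul_comm]
  change _ = L _ y
  rw [hsum, map_sum]
  simp only [map_sum, map_zsmul]
  simp [phiContr_apply, phiF_eq_cast, L, mul_comm]

lemma hook_covD_Phi_eq_zero
    (hD_add : ∀ (f g : Y → ℝ) (a : Idx), D (f + g) a = D f a + D g a) (a : Idx)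
    (hΓ : ∀ y, AnnihilatesPhi (Matrix.of fun b e => Γ a b e y)) {α : Form Y 2}
    (hα : hook (k := 2) (m := 1) α (Phi Y) = 0) :
    hook (k := 2) (m := 1) (covD D Γ a α) (Phi Y) = 0 := by
  have hZ : ∀ y, phiContr (Matrix.of fun p q => α ![p, q] y) = 0 := fun y => by
    ext c
    simpa [hook_two_Phi] using congrFun (congrFun hα ![c]) y
  have hD_zero : D 0 a = 0 := by simpa using hD_add 0 0 a
  ext w y
  set G := Matrix.of fun b e => Γ a b e y
  set Z := Matrix.of fun p q => α ![p, q] y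
  have hanti : ∀ b e, Γ a b e y = -Γ a e b y := fun b e =>
    congrFun (congrFun (hΓ y).transpose_eq_neg e) b
  have hcov : (Matrix.of fun p q => covD D Γ a α ![p, q] y)
      = (Matrix.of fun p q => D (α ![p, q]) a y) + (Gᵀ * Z + Z * G) := by
    ext p q
    simp only [covD_two, Matrix.of_apply, Matrix.add_apply, Matrix.mul_apply,
      Matrix.transpose_apply, G, Z]
    simp [hanti _ q, hanti _ p, Finset.sum_add_distrib, mul_comm (α _ _)]
    ring
  rw [hook_two_Phi, hcov, map_add, Pi.add_apply, phiContr_deriv_comm D hD_add,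
    (hΓ y).phiContr_transpose_mul_add_mul (hZ y)]
  simp [hZ, ← Pi.zero_def, hD_zero]

end Components

theorem antisymmetric_one_form_identities_general {Y : Type}
    (D : (Y → ℝ) → Idx → Y → ℝ)
    (hD_add : ∀ (f g : Y → ℝ) (a : Idx), D (f + g) a = D f a + D g a)
    (Γ : Idx → Idx → Idx → Y → ℝ)
    -- `∇` is compatible with the `G₂` structure (the standard `φ` in this frame):
    (hcompat : ∀ (a b c d : Idx) (y : Y),
      ∑ e : Idx, (Γ a b e y * phiF e c d + Γ a c e y * phiF b e d
        + Γ a d e y * phiF b c e) = 0)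
    (z : Idx → Form Y 1)
    (hz_anti : ∀ (a b : Idx) (y : Y), z a ![b] y = -(z b ![a] y)) :
    (∀ a : Idx,
      dThetaLow D Γ z a
        = -(contr (dS D ((fun v y => z (v 0) ![v 1] y) : Form Y 2)) a)
          + (fun v y =>
              D (fun y' => z (v 0) ![v 1] y') a y
                - ∑ e : Idx, (Γ a (v 0) e y * z e ![v 1] y
                    + Γ a (v 1) e y * z (v 0) ![e] y)))
    ∧ (hook (k := 2) (m := 1) ((fun v y => z (v 0) ![v 1] y) : Form Y 2) (Phi Y) = 0 →
        ∀ a : Idx,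
          hook (k := 2) (m := 1)
            (dThetaLow D Γ z a
              + contr (dS D ((fun v y => z (v 0) ![v 1] y) : Form Y 2)) a)
            (Phi Y) = 0) := by
  refine ⟨fun a => ?_, fun h14 a => ?_⟩
  · rw [dThetaLow_eq_neg_contr_dS_add_covD D Γ z hz_anti a]
    ext v y
    simp [covD_two]
  · rw [dThetaLow_eq_neg_contr_dS_add_covD D Γ z hz_anti a, neg_add_cancel_comm]
    exact hook_covD_Phi_eq_zero D Γ hD_add a (fun y b c d => hcompat a b c d y) h14

/-- Let `z ∈ Λ¹(Y,T*Y)` with antisymmetric matrix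
`z_{ab} = (z_a)_b`, and let `zz` denote the associated two-form. Then
`d_θ z_a = −(dz)_a + (1/2)(∇_a z_{bc}) dx^{bc}`; and if moreover `z ∈ Λ²₁₄`
then `(d_θ z_a + (dz)_a) ⌟ φ = 0`. -/
theorem antisymmetric_one_form_identities {Y : Type}
    (D : (Y → ℝ) → Idx → Y → ℝ)
    (hD_add : ∀ (f g : Y → ℝ) (a : Idx), D (f + g) a = D f a + D g a)
    (hD_mul : ∀ (f g : Y → ℝ) (a : Idx), D (f * g) a = f * D g a + g * D f a)
    (Γ : Idx → Idx → Idx → Y → ℝ)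
    -- `∇` is compatible with the `G₂` structure (the standard `φ` in this frame):
    (hcompat : ∀ (a b c d : Idx) (y : Y),
      ∑ e : Idx, (Γ a b e y * phiF e c d + Γ a c e y * phiF b e d
        + Γ a d e y * phiF b c e) = 0)
    (z : Idx → Form Y 1)
    (hz_anti : ∀ (a b : Idx) (y : Y), z a ![b] y = -(z b ![a] y)) :
    (∀ a : Idx,
      dThetaLow D Γ z a
        = -(contr (dS D ((fun v y => z (v 0) ![v 1] y) : Form Y 2)) a)
          + (fun v y =>
              D (fun y' => z (v 0) ![v 1] y') a y
                - ∑ e : Idx, (Γ a (v 0) e y * z e ![v 1] y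
                    + Γ a (v 1) e y * z (v 0) ![e] y)))
    ∧ (hook (k := 2) (m := 1) ((fun v y => z (v 0) ![v 1] y) : Form Y 2) (Phi Y) = 0 →
        ∀ a : Idx,
          hook (k := 2) (m := 1)
            (dThetaLow D Γ z a
              + contr (dS D ((fun v y => z (v 0) ![v 1] y) : Form Y 2)) a)
            (Phi Y) = 0) :=
  antisymmetric_one_form_identities_general D hD_add Γ hcompat z hz_anti

end
end G2S
end
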